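/- arXiv:1511.04004 — 6 statements merged into one kernel-verified Lean document; each statement's English description precedes it below -/
import Mathlib

section
/- For every integer n ≥ 13, the system B_n has exactly 1 + r_4(2 + 2^(2^(n-12))) solutions in integers x_1, …, x_n; that is, the set of tuples (x_1, …, x_n) ∈ ℤ^n satisfying all equations of B_n has cardinality 1 + r_4(2 + 2^(2^(n-12))). -/
/-!
From `t + t = t * t` for `t = x (n - 11)` we get `t ∈ {0, 2}`, and the squaring chain forces
`x j = t ^ 2 ^ j` for `1 ≤ j ≤ n - 12`, so `x n = t + t ^ 2 ^ (n - 12)`. The remaining equations say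
that `x n` is the sum of the squares of `x (n - 10), x (n - 8), x (n - 6), x (n - 4)`, and these four
values together with `t` determine the solution. For `t = 0` only the zero solution remains; for
`t = 2` the solutions correspond to the representations of `2 + 2 ^ 2 ^ (n - 12)` as a sum of four
squares.
-/

/-- `r4 m` is the number of representations of `m` as a sum of four squares of integers. -/
noncomputable def r4 (m : ℕ) : ℕ := {a : Fin 4 → ℤ | ∑ i, (a i) ^ 2 = (m : ℤ)}.ncard

/-- The system `B_n` of Browkin, in the unknowns `x 1, …, x n`. -/
def BSys (n : ℕ) (x : ℕ → ℤ) : Prop :=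
  (∀ i, 1 ≤ i → i ≤ n - 13 → x i * x i = x (i + 1)) ∧
  x (n - 11) + x (n - 11) = x 1 ∧
  x (n - 11) * x (n - 11) = x 1 ∧
  x (n - 10) * x (n - 10) = x (n - 9) ∧
  x (n - 8) * x (n - 8) = x (n - 7) ∧
  x (n - 6) * x (n - 6) = x (n - 5) ∧
  x (n - 4) * x (n - 4) = x (n - 3) ∧
  x (n - 9) + x (n - 7) = x (n - 2) ∧
  x (n - 5) + x (n - 3) = x (n - 1) ∧
  x (n - 2) + x (n - 1) = x n ∧
  x (n - 11) + x (n - 12) = x n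

/-- Integer solutions of `B_n`, encoded as functions `ℕ → ℤ` vanishing outside `{1, …, n}`
(so that this set is in natural bijection with the set of solution tuples in `ℤ^n`). -/
def BSet (n : ℕ) : Set (ℕ → ℤ) :=
  {x | (∀ i, i = 0 ∨ n < i → x i = 0) ∧ BSys n x}

lemma eq_zero_or_eq_two_of_add_self_eq_mul_self {t : ℤ} (h : t + t = t * t) : t = 0 ∨ t = 2 := by
  have : t * (t - 2) = 0 := by linear_combination -h
  rcases mul_eq_zero.mp this with h0 | h2
  · exact .inl h0
  · exact .inr (by linarith)

lemma eq_pow_two_pow_of_mul_self_eq {M : Type*} [Monoid M] {x : ℕ → M} {m : ℕ}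
    (h : ∀ i, 1 ≤ i → i ≤ m → x i * x i = x (i + 1)) :
    ∀ j, 1 ≤ j → j ≤ m + 1 → x j = x 1 ^ 2 ^ (j - 1) := by
  intro j hj
  induction j, hj using Nat.le_induction with
  | base => simp
  | succ j hj ih =>
    intro hjm
    rw [← h j hj (by omega), ih (by omega), ← pow_add, ← two_mul, ← pow_succ',
      Nat.sub_add_cancel hj, Nat.add_sub_cancel]

lemma finite_setOf_sum_sq_eq {ι : Type*} [Fintype ι] (m : ℤ) :
    {a : ι → ℤ | ∑ i, a i ^ 2 = m}.Finite := by
  refine (Set.Finite.pi' fun _ => Set.finite_Icc (-m) m).subset fun a ha i => ?_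
  have hle : a i ^ 2 ≤ m :=
    ha ▸ Finset.single_le_sum (f := fun i => a i ^ 2) (fun _ _ => sq_nonneg _) (Finset.mem_univ i)
  have := Int.le_self_sq (a i)
  have := Int.le_self_sq (-a i)
  rw [neg_sq] at this
  exact ⟨by linarith, by linarith⟩

lemma eq_zero_of_sum_sq_eq_zero {ι : Type*} [Fintype ι] {a : ι → ℤ}
    (h : ∑ i, a i ^ 2 = 0) : a = 0 := by
  funext i
  exact pow_eq_zero_iff two_ne_zero |>.mp <|
    (Finset.sum_eq_zero_iff_of_nonneg fun _ _ => sq_nonneg _).mp h i (Finset.mem_univ i)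

/-- The values `x (n - k)`, `k ≤ 11`, of the solution with `x (n - 11) = t` and
`(x (n - 10), x (n - 8), x (n - 6), x (n - 4)) = a`. -/
def BTail (t : ℤ) (a : Fin 4 → ℤ) : ℕ → ℤ
  | 0 => a 0 ^ 2 + a 1 ^ 2 + (a 2 ^ 2 + a 3 ^ 2)
  | 1 => a 2 ^ 2 + a 3 ^ 2
  | 2 => a 0 ^ 2 + a 1 ^ 2
  | 3 => a 3 ^ 2
  | 4 => a 3
  | 5 => a 2 ^ 2
  | 6 => a 2
  | 7 => a 1 ^ 2
  | 8 => a 1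
  | 9 => a 0 ^ 2
  | 10 => a 0
  | 11 => t
  | _ => 0

def BSol (n : ℕ) (t : ℤ) (a : Fin 4 → ℤ) (j : ℕ) : ℤ :=
  if j = 0 ∨ n < j then 0 else if j ≤ n - 12 then t ^ 2 ^ j else BTail t a (n - j)

section BSol

variable {n : ℕ} {t : ℤ} {a : Fin 4 → ℤ}

lemma BSol_of_le {j : ℕ} (h1 : 1 ≤ j) (h2 : j ≤ n - 12) : BSol n t a j = t ^ 2 ^ j := by
  rw [BSol, if_neg (by omega), if_pos h2]

lemma BSol_sub (hn : 13 ≤ n) {k : ℕ} (hk : k ≤ 11) : BSol n t a (n - k) = BTail t a k := by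
  rw [BSol, if_neg (by omega), if_neg (by omega), Nat.sub_sub_self (by omega)]

lemma BSol_self (hn : 13 ≤ n) : BSol n t a n = BTail t a 0 := BSol_sub hn (Nat.zero_le _)

lemma BSol_mem_BSet (hn : 13 ≤ n) (ht : t = 0 ∨ t = 2)
    (ha : ∑ i, a i ^ 2 = t + t ^ 2 ^ (n - 12)) : BSol n t a ∈ BSet n := by
  have htt : t + t = t ^ 2 := by rcases ht with rfl | rfl <;> norm_num
  have h1 : BSol n t a 1 = t ^ 2 := BSol_of_le le_rfl (by omega)
  refine ⟨fun j hj => if_pos hj, fun i hi1 hi2 => ?_, ?_⟩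
  · rw [BSol_of_le hi1 (by omega), BSol_of_le (by omega) (by omega), ← pow_add, ← two_mul,
      pow_succ']
  simp (disch := omega) only [BSol_sub hn, BSol_self hn, h1,
    BSol_of_le (j := n - 12) (by omega) le_rfl, BTail, ← sq, true_and]
  exact ⟨htt, by rw [← ha, Fin.sum_univ_four]; ring⟩

lemma exists_BSol_eq_of_mem_BSet (hn : 13 ≤ n) {x : ℕ → ℤ} (hx : x ∈ BSet n) :
    ∃ t a, (t = 0 ∨ t = 2) ∧ ∑ i, a i ^ 2 = t + t ^ 2 ^ (n - 12) ∧ BSol n t a = x := by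
  obtain ⟨hz, hc, h2, h3, h4, h5, h6, h7, h8, h9, h10, h11⟩ := hx
  have hchain : ∀ j, 1 ≤ j → j ≤ n - 12 → x j = x (n - 11) ^ 2 ^ j := fun j hj1 hj2 => by
    rw [eq_pow_two_pow_of_mul_self_eq hc j hj1 (by omega), ← h3, ← sq, ← pow_mul, ← pow_succ',
      Nat.sub_add_cancel hj1]
  have hxn : x n = x (n - 11) + x (n - 11) ^ 2 ^ (n - 12) := by
    rw [← h11, hchain _ (by omega) le_rfl]
  refine ⟨x (n - 11), ![x (n - 10), x (n - 8), x (n - 6), x (n - 4)],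
    eq_zero_or_eq_two_of_add_self_eq_mul_self (h2.trans h3.symm), ?_, ?_⟩
  · rw [Fin.sum_univ_four, ← hxn, ← h10, ← h8, ← h9, ← h4, ← h5, ← h6, ← h7]
    simp only [Matrix.cons_val, sq]
    ring
  funext j
  by_cases hj : j = 0 ∨ n < j
  · rw [BSol, if_pos hj, hz j hj]
  by_cases hj' : j ≤ n - 12
  · rw [BSol_of_le (by omega) hj', hchain j (by omega) hj']
  obtain ⟨k, hk, rfl⟩ : ∃ k ≤ 11, j = n - k := ⟨n - j, by omega, by omega⟩
  rw [BSol_sub hn hk]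
  interval_cases k <;> simp [BTail, sq, h4, h5, h6, h7, h8, h9, h10]

lemma BSol_injective (hn : 13 ≤ n) : Function.Injective (BSol n t) := by
  intro a b h
  have htail : ∀ k ≤ 11, BTail t a k = BTail t b k := fun k hk => by
    rw [← BSol_sub hn hk, ← BSol_sub hn hk, h]
  funext i
  fin_cases i
  exacts [htail 10 (by norm_num), htail 8 (by norm_num), htail 6 (by norm_num),
    htail 4 (by norm_num)]

end BSol

lemma BSet_eq_insert_image {n : ℕ} (hn : 13 ≤ n) :
    BSet n = insert (BSol n 0 0) (BSol n 2 '' {a | ∑ i, a i ^ 2 = 2 + 2 ^ 2 ^ (n - 12)}) := by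
  ext x
  constructor
  · intro hx
    obtain ⟨t, a, rfl | rfl, ha, rfl⟩ := exists_BSol_eq_of_mem_BSet hn hx
    · left
      rw [eq_zero_of_sum_sq_eq_zero (a := a) (by simpa using ha)]
    · exact .inr ⟨a, ha, rfl⟩
  · rintro (rfl | ⟨a, ha, rfl⟩)
    · exact BSol_mem_BSet hn (.inl rfl) (by simp)
    · exact BSol_mem_BSet hn (.inr rfl) ha

lemma BSol_zero_notMem_image {n : ℕ} (hn : 13 ≤ n) (S : Set (Fin 4 → ℤ)) :
    BSol n 0 0 ∉ BSol n 2 '' S := by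
  rintro ⟨a, -, h⟩
  have := congrFun h (n - 11)
  rw [BSol_sub hn le_rfl, BSol_sub hn le_rfl] at this
  exact two_ne_zero this

theorem stmt0 (n : ℕ) (hn : 13 ≤ n) :
    (BSet n).ncard = 1 + r4 (2 + 2 ^ 2 ^ (n - 12)) := by
  rw [BSet_eq_insert_image hn, Set.ncard_insert_of_notMem (BSol_zero_notMem_image hn _)
    ((finite_setOf_sum_sq_eq _).image _), (BSol_injective hn).injOn.ncard_image, r4]
  push_cast
  ring
end

section
/- Let n ≥ 13 be an integer. A tuple (x_1, …, x_n) ∈ ℤ^n is a solution of the system B_n if and only if either x_1 = x_2 = … = x_n = 0, or the following hold: x_{n−11} = 2, x_1 = 4, x_{i+1} = x_i² for all i ∈ {1, …, n−13} (so x_{n−12} = 2^(2^(n-12))), x_n = 2 + 2^(2^(n-12)), x_{n−9} = x_{n−10}², x_{n−7} = x_{n−8}², x_{n−5} = x_{n−6}², x_{n−3} = x_{n−4}², x_{n−2} = x_{n−9} + x_{n−7}, x_{n−1} = x_{n−5} + x_{n−3}, and x_{n−10}² + x_{n−8}² + x_{n−6}² + x_{n−4}² = 2 + 2^(2^(n-12)).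 -/
set_option maxHeartbeats 1600000 in
theorem stmt2 (n : ℕ) (hn : 13 ≤ n) (x : ℕ → ℤ) :
    BSys n x ↔
      (∀ i, 1 ≤ i → i ≤ n → x i = 0) ∨
      (x (n - 11) = 2 ∧
       x 1 = 4 ∧
       (∀ i, 1 ≤ i → i ≤ n - 13 → x (i + 1) = (x i) ^ 2) ∧
       x (n - 12) = 2 ^ 2 ^ (n - 12) ∧
       x n = 2 + 2 ^ 2 ^ (n - 12) ∧
       x (n - 9) = (x (n - 10)) ^ 2 ∧
       x (n - 7) = (x (n - 8)) ^ 2 ∧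
       x (n - 5) = (x (n - 6)) ^ 2 ∧
       x (n - 3) = (x (n - 4)) ^ 2 ∧
       x (n - 2) = x (n - 9) + x (n - 7) ∧
       x (n - 1) = x (n - 5) + x (n - 3) ∧
       (x (n - 10)) ^ 2 + (x (n - 8)) ^ 2 + (x (n - 6)) ^ 2 + (x (n - 4)) ^ 2 =
         2 + 2 ^ 2 ^ (n - 12)) := by
  constructor
  · rintro ⟨h1, h2, h3, h4, h5, h6, h7, h8, h9, h10, h11⟩
    have hcases : x (n - 11) = 0 ∨ x (n - 11) = 2 := by
      have h0 : x (n - 11) * (x (n - 11) - 2) = 0 := by linear_combination h3 - h2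
      rcases mul_eq_zero.mp h0 with h | h
      · exact Or.inl h
      · exact Or.inr (by linarith)
    rcases hcases with h11z | h11t
    · -- zero case
      left
      have hx1 : x 1 = 0 := by rw [← h2, h11z]; ring
      have hchain : ∀ i, 1 ≤ i → i ≤ n - 12 → x i = 0 := by
        intro i
        induction i with
        | zero => omega
        | succ k ih =>
          intro hk1 hk2
          rcases Nat.eq_zero_or_pos k with hk | hk
          · subst hk; exact hx1
          · have := ih hk (by omega)
            rw [← h1 k hk (by omega), this]; ring
      have hx12 : x (n - 12) = 0 := hchain (n - 12) (by omega) le_rfl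
      have hxn : x n = 0 := by rw [← h11, h11z, hx12]; ring
      have hsum : x (n - 10) * x (n - 10) + x (n - 8) * x (n - 8) +
          x (n - 6) * x (n - 6) + x (n - 4) * x (n - 4) = 0 := by
        rw [h4, h5, h6, h7]; linarith [h8, h9, h10, hxn]
      have n10 := mul_self_nonneg (x (n - 10))
      have n8 := mul_self_nonneg (x (n - 8))
      have n6 := mul_self_nonneg (x (n - 6))
      have n4 := mul_self_nonneg (x (n - 4))
      have s10 : x (n - 10) = 0 := mul_self_eq_zero.mp (le_antisymm (by linarith) n10)
      have s8 : x (n - 8) = 0 := mul_self_eq_zero.mp (le_antisymm (by linarith) n8)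
      have s6 : x (n - 6) = 0 := mul_self_eq_zero.mp (le_antisymm (by linarith) n6)
      have s4 : x (n - 4) = 0 := mul_self_eq_zero.mp (le_antisymm (by linarith) n4)
      have s9 : x (n - 9) = 0 := by rw [← h4, s10]; ring
      have s7 : x (n - 7) = 0 := by rw [← h5, s8]; ring
      have s5 : x (n - 5) = 0 := by rw [← h6, s6]; ring
      have s3 : x (n - 3) = 0 := by rw [← h7, s4]; ring
      have s2 : x (n - 2) = 0 := by rw [← h8, s9, s7]; ring
      have s1 : x (n - 1) = 0 := by rw [← h9, s5, s3]; ring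
      intro i hi1 hi2
      have : i ≤ n - 12 ∨ i = n - 11 ∨ i = n - 10 ∨ i = n - 9 ∨ i = n - 8 ∨ i = n - 7 ∨
          i = n - 6 ∨ i = n - 5 ∨ i = n - 4 ∨ i = n - 3 ∨ i = n - 2 ∨ i = n - 1 ∨ i = n := by
        omega
      rcases this with h | h | h | h | h | h | h | h | h | h | h | h | h
      · exact hchain i hi1 h
      all_goals subst h
      exacts [h11z, s10, s9, s8, s7, s6, s5, s4, s3, s2, s1, hxn]
    · -- the nonzero case
      right
      have hx1 : x 1 = 4 := by rw [← h2, h11t]; ring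
      have hchain : ∀ i, 1 ≤ i → i ≤ n - 12 → x i = 2 ^ 2 ^ i := by
        intro i
        induction i with
        | zero => omega
        | succ k ih =>
          intro hk1 hk2
          rcases Nat.eq_zero_or_pos k with hk | hk
          · subst hk; rw [hx1]; norm_num
          · have hik := ih hk (by omega)
            rw [← h1 k hk (by omega), hik, ← pow_add]
            congr 1
            rw [pow_succ]; ring
      have hx12 : x (n - 12) = 2 ^ 2 ^ (n - 12) := hchain (n - 12) (by omega) le_rfl
      have hxn : x n = 2 + 2 ^ 2 ^ (n - 12) := by rw [← h11, h11t, hx12]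
      refine ⟨h11t, hx1, ?_, hx12, hxn, ?_, ?_, ?_, ?_, h8.symm, h9.symm, ?_⟩
      · intro i hi1 hi2; rw [← h1 i hi1 hi2]; ring
      · rw [← h4]; ring
      · rw [← h5]; ring
      · rw [← h6]; ring
      · rw [← h7]; ring
      · have hs : x (n - 9) + x (n - 7) + (x (n - 5) + x (n - 3)) = 2 + 2 ^ 2 ^ (n - 12) := by
          rw [h8, h9, h10, hxn]
        have q10 : (x (n - 10)) ^ 2 = x (n - 9) := by rw [← h4]; ring
        have q8 : (x (n - 8)) ^ 2 = x (n - 7) := by rw [← h5]; ring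
        have q6 : (x (n - 6)) ^ 2 = x (n - 5) := by rw [← h6]; ring
        have q4 : (x (n - 4)) ^ 2 = x (n - 3) := by rw [← h7]; ring
        rw [q10, q8, q6, q4]; linarith [hs]
  · rintro (hz | ⟨e11, e1, echain, e12, en, e9, e7, e5, e3, e2, e1', esum⟩)
    · have z1 : x 1 = 0 := hz 1 (by omega) (by omega)
      have z12 : x (n - 12) = 0 := hz (n - 12) (by omega) (by omega)
      have z11 : x (n - 11) = 0 := hz (n - 11) (by omega) (by omega)
      have z10 : x (n - 10) = 0 := hz (n - 10) (by omega) (by omega)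
      have z9 : x (n - 9) = 0 := hz (n - 9) (by omega) (by omega)
      have z8 : x (n - 8) = 0 := hz (n - 8) (by omega) (by omega)
      have z7 : x (n - 7) = 0 := hz (n - 7) (by omega) (by omega)
      have z6 : x (n - 6) = 0 := hz (n - 6) (by omega) (by omega)
      have z5 : x (n - 5) = 0 := hz (n - 5) (by omega) (by omega)
      have z4 : x (n - 4) = 0 := hz (n - 4) (by omega) (by omega)
      have z3 : x (n - 3) = 0 := hz (n - 3) (by omega) (by omega)
      have z2 : x (n - 2) = 0 := hz (n - 2) (by omega) (by omega)
      have zb1 : x (n - 1) = 0 := hz (n - 1) (by omega) (by omega)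
      have zn : x n = 0 := hz n (by omega) (by omega)
      refine ⟨?_, ?_, ?_, ?_, ?_, ?_, ?_, ?_, ?_, ?_, ?_⟩
      · intro i hi1 hi2
        rw [hz i hi1 (by omega), hz (i + 1) (by omega) (by omega)]; ring
      · rw [z11, z1]; ring
      · rw [z11, z1]; ring
      · rw [z10, z9]; ring
      · rw [z8, z7]; ring
      · rw [z6, z5]; ring
      · rw [z4, z3]; ring
      · rw [z9, z7, z2]; ring
      · rw [z5, z3, zb1]; ring
      · rw [z2, zb1, zn]; ring
      · rw [z11, z12, zn]; ring
    · refine ⟨?_, ?_, ?_, ?_, ?_, ?_, ?_, ?_, ?_, ?_, ?_⟩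
      · intro i hi1 hi2; rw [echain i hi1 hi2]; ring
      · rw [e11, e1]; ring
      · rw [e11, e1]; ring
      · rw [e9]; ring
      · rw [e7]; ring
      · rw [e5]; ring
      · rw [e3]; ring
      · rw [e2]
      · rw [e1']
      · rw [e2, e1', e9, e7, e5, e3, en]; linarith [esum]
      · rw [e11, e12, en]
end

section
/- For every integer n ≥ 12, the system T_n has exactly 1 + Σ_{a} r_3(a^(2^(n-12))) solutions in integers x_1, …, x_n, the sum taken over all integers a of the form a = 2 + 2^k or a = 2 − 2^k with k ∈ {0, 1, …, 2^(n-12)}, each distinct integer a counted once. -/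
/-- `r3 m` is the number of representations of the integer `m` as a sum of three squares
of integers (it is `0` when `m < 0`). -/
noncomputable def r3 (m : ℤ) : ℕ := {a : Fin 3 → ℤ | ∑ i, (a i) ^ 2 = m}.ncard

/-- The system `T_n`, in the unknowns `x 1, …, x n`. -/
def TSys (n : ℕ) (x : ℕ → ℤ) : Prop :=
  (∀ i, 1 ≤ i → i ≤ n - 12 → x i * x i = x (i + 1)) ∧
  x (n - 10) * x (n - 10) = x (n - 10) ∧
  x (n - 10) + x (n - 10) = x (n - 9) ∧
  x (n - 8) + x (n - 9) = x 1 ∧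
  x (n - 8) * x (n - 7) = x (n - 11) ∧
  x (n - 10) * x (n - 7) = x (n - 7) ∧
  x (n - 6) * x (n - 6) = x (n - 5) ∧
  x (n - 4) * x (n - 4) = x (n - 3) ∧
  x (n - 2) * x (n - 2) = x (n - 1) ∧
  x (n - 5) + x (n - 3) = x n ∧
  x (n - 1) + x n = x (n - 11)

/-- Integer solutions of `T_n`, encoded as functions `ℕ → ℤ` vanishing outside `{1, …, n}`
(so that this set is in natural bijection with the set of solution tuples in `ℤ^n`). -/
def TSet (n : ℕ) : Set (ℕ → ℤ) :=
  {x | (∀ i, i = 0 ∨ n < i → x i = 0) ∧ TSys n x}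

section Aux

/-- The system with all indices spelled out for `n = m + 12`. -/
lemma TSys_arith (m : ℕ) (x : ℕ → ℤ) : TSys (m + 12) x ↔
    ((∀ i, 1 ≤ i → i ≤ m → x i * x i = x (i + 1)) ∧
     x (m + 2) * x (m + 2) = x (m + 2) ∧
     x (m + 2) + x (m + 2) = x (m + 3) ∧
     x (m + 4) + x (m + 3) = x 1 ∧
     x (m + 4) * x (m + 5) = x (m + 1) ∧
     x (m + 2) * x (m + 5) = x (m + 5) ∧
     x (m + 6) * x (m + 6) = x (m + 7) ∧
     x (m + 8) * x (m + 8) = x (m + 9) ∧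
     x (m + 10) * x (m + 10) = x (m + 11) ∧
     x (m + 7) + x (m + 9) = x (m + 12) ∧
     x (m + 11) + x (m + 12) = x (m + 1)) := Iff.rfl

lemma repFinite (N : ℤ) : {b : Fin 3 → ℤ | ∑ i, (b i) ^ 2 = N}.Finite := by
  apply Set.Finite.subset (Set.Finite.pi (fun _ : Fin 3 => Set.finite_Icc (-N) N))
  intro b hb
  simp only [Set.mem_setOf_eq] at hb
  intro i _
  have h1 : (b i) ^ 2 ≤ N := by
    rw [← hb]
    exact Finset.single_le_sum (fun j _ => sq_nonneg (b j)) (Finset.mem_univ i)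
  have h2 : (|b i| : ℤ) ≤ (b i) ^ 2 := by
    have := Int.natAbs_le_self_sq (b i)
    rwa [Int.abs_eq_natAbs]
  have := abs_le.mp (h2.trans h1)
  simpa [Set.mem_Icc] using this

lemma sig_finite (S : Finset ℤ) (N : ℤ → ℤ) :
    {p : ℤ × (Fin 3 → ℤ) | p.1 ∈ S ∧ ∑ i, (p.2 i) ^ 2 = N p.1}.Finite := by
  apply Set.Finite.subset
    (Set.Finite.biUnion S.finite_toSet
      (fun a _ => (repFinite (N a)).image (Prod.mk a)))
  rintro ⟨x, y⟩ ⟨hx, hy⟩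
  exact Set.mem_biUnion hx ⟨y, hy, rfl⟩

lemma sig_card (S : Finset ℤ) (N : ℤ → ℤ) :
    {p : ℤ × (Fin 3 → ℤ) | p.1 ∈ S ∧ ∑ i, (p.2 i) ^ 2 = N p.1}.ncard
      = ∑ a ∈ S, r3 (N a) := by
  classical
  induction S using Finset.induction_on with
  | empty => simp
  | insert a S ha ih =>
    have hset : {p : ℤ × (Fin 3 → ℤ) | p.1 ∈ insert a S ∧ ∑ i, (p.2 i) ^ 2 = N p.1}
        = (Prod.mk a '' {b : Fin 3 → ℤ | ∑ i, (b i) ^ 2 = N a})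
          ∪ {p : ℤ × (Fin 3 → ℤ) | p.1 ∈ S ∧ ∑ i, (p.2 i) ^ 2 = N p.1} := by
      ext ⟨x, y⟩
      simp only [Set.mem_setOf_eq, Finset.mem_insert, Set.mem_union, Set.mem_image,
        Prod.mk.injEq]
      constructor
      · rintro ⟨(rfl | hx), hy⟩
        · exact Or.inl ⟨y, hy, rfl, rfl⟩
        · exact Or.inr ⟨hx, hy⟩
      · rintro (⟨b, hb, rfl, rfl⟩ | ⟨hx, hy⟩)
        · exact ⟨Or.inl rfl, hb⟩
        · exact ⟨Or.inr hx, hy⟩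
    rw [hset, Set.ncard_union_eq ?_ ((repFinite (N a)).image _) (sig_finite S N),
      Set.ncard_image_of_injOn (fun b _ b' _ h => congrArg Prod.snd h),
      ih, Finset.sum_insert ha]
    · rfl
    · rw [Set.disjoint_left]
      rintro ⟨x, y⟩ ⟨b, hb, heq⟩ ⟨hx, -⟩
      have : x = a := (congrArg Prod.fst heq).symm
      exact ha (this ▸ hx)

def Afin (m : ℕ) : Finset ℤ :=
  ((Finset.range (2 ^ m + 1)).image fun k => (2 + 2 ^ k : ℤ)) ∪
    ((Finset.range (2 ^ m + 1)).image fun k => (2 - 2 ^ k : ℤ))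

lemma mem_Afin {m : ℕ} {a : ℤ} :
    a ∈ Afin m ↔ ∃ k ≤ 2 ^ m, a = 2 + 2 ^ k ∨ a = 2 - 2 ^ k := by
  simp only [Afin, Finset.mem_union, Finset.mem_image, Finset.mem_range, Nat.lt_succ_iff]
  constructor
  · rintro (⟨k, hk, rfl⟩ | ⟨k, hk, rfl⟩)
    · exact ⟨k, hk, Or.inl rfl⟩
    · exact ⟨k, hk, Or.inr rfl⟩
  · rintro ⟨k, hk, (rfl | rfl)⟩
    · exact Or.inl ⟨k, hk, rfl⟩
    · exact Or.inr ⟨k, hk, rfl⟩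

lemma dvd_two_pow {d : ℤ} {E : ℕ} (h : d ∣ 2 ^ E) :
    ∃ k ≤ E, d = 2 ^ k ∨ d = -(2 ^ k) := by
  have h1 : d.natAbs ∣ 2 ^ E := by
    have := Int.natAbs_dvd_natAbs.mpr h
    rwa [show ((2:ℤ)^E).natAbs = 2 ^ E by simp [Int.natAbs_pow]] at this
  obtain ⟨k, hk, hdk⟩ := (Nat.dvd_prime_pow Nat.prime_two).mp h1
  refine ⟨k, hk, ?_⟩
  rcases Int.natAbs_eq d with h | h
  · left; rw [h, hdk]; push_cast; ring
  · right; rw [h, hdk]; push_cast; ring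

lemma dvd_of_mem_Afin {m : ℕ} {a : ℤ} (ha : a ∈ Afin m) : (a - 2) ∣ a ^ 2 ^ m := by
  obtain ⟨k, hk, h⟩ := mem_Afin.mp ha
  have hd : (a - 2) ∣ (2 : ℤ) ^ 2 ^ m := by
    have h2 : (2:ℤ) ^ k ∣ 2 ^ 2 ^ m := pow_dvd_pow 2 hk
    rcases h with rfl | rfl
    · simpa using h2
    · simp only [show (2 : ℤ) - 2 ^ k - 2 = -(2 ^ k) by ring]
      exact (neg_dvd).mpr h2
  have h1 := sub_dvd_pow_sub_pow a 2 (2 ^ m)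
  have := dvd_add h1 hd
  simpa using this

lemma mem_Afin_of_dvd {m : ℕ} {a : ℤ} (ha : a ≠ 2) (h : (a - 2) ∣ a ^ 2 ^ m) :
    a ∈ Afin m := by
  have hd : (a - 2) ∣ (2 : ℤ) ^ 2 ^ m := by
    have h1 := sub_dvd_pow_sub_pow a 2 (2 ^ m)
    have := dvd_sub h h1
    simpa using this
  obtain ⟨k, hk, hor⟩ := dvd_two_pow hd
  rw [mem_Afin]
  exact ⟨k, hk, by rcases hor with h | h <;> [left; right] <;> linarith⟩

/-- The explicit solution of `T_{m+12}` built from `x 1 = a` and the three-squares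
representation `b` of `a ^ 2 ^ m`. -/
def sol (m : ℕ) (a : ℤ) (b : Fin 3 → ℤ) : ℕ → ℤ := fun i =>
  if i = 0 then 0
  else if i ≤ m + 1 then a ^ 2 ^ (i - 1)
  else if i = m + 2 then 1
  else if i = m + 3 then 2
  else if i = m + 4 then a - 2
  else if i = m + 5 then a ^ 2 ^ m / (a - 2)
  else if i = m + 6 then b 0
  else if i = m + 7 then (b 0) ^ 2
  else if i = m + 8 then b 1
  else if i = m + 9 then (b 1) ^ 2
  else if i = m + 10 then b 2
  else if i = m + 11 then (b 2) ^ 2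
  else if i = m + 12 then (b 0) ^ 2 + (b 1) ^ 2
  else 0

variable {m : ℕ} {a : ℤ} {b : Fin 3 → ℤ}

lemma sol_chain {i : ℕ} (h1 : 1 ≤ i) (h2 : i ≤ m + 1) :
    sol m a b i = a ^ 2 ^ (i - 1) := by
  unfold sol; rw [if_neg (by omega), if_pos h2]

lemma sol_one : sol m a b 1 = a := by rw [sol_chain le_rfl (by omega)]; norm_num

lemma sol_top : sol m a b (m + 1) = a ^ 2 ^ m := by
  rw [sol_chain (by omega) le_rfl, Nat.add_sub_cancel]

lemma sol_m2 : sol m a b (m + 2) = 1 := by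
  unfold sol; rw [if_neg (by omega), if_neg (by omega), if_pos rfl]

lemma sol_m3 : sol m a b (m + 3) = 2 := by
  unfold sol
  rw [if_neg (by omega), if_neg (by omega), if_neg (by omega), if_pos rfl]

lemma sol_m4 : sol m a b (m + 4) = a - 2 := by
  unfold sol
  rw [if_neg (by omega), if_neg (by omega), if_neg (by omega), if_neg (by omega), if_pos rfl]

lemma sol_m5 : sol m a b (m + 5) = a ^ 2 ^ m / (a - 2) := by
  unfold sol
  rw [if_neg (by omega), if_neg (by omega), if_neg (by omega), if_neg (by omega),
    if_neg (by omega), if_pos rfl]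

lemma sol_m6 : sol m a b (m + 6) = b 0 := by
  unfold sol
  rw [if_neg (by omega), if_neg (by omega), if_neg (by omega), if_neg (by omega),
    if_neg (by omega), if_neg (by omega), if_pos rfl]

lemma sol_m7 : sol m a b (m + 7) = (b 0) ^ 2 := by
  unfold sol
  rw [if_neg (by omega), if_neg (by omega), if_neg (by omega), if_neg (by omega),
    if_neg (by omega), if_neg (by omega), if_neg (by omega), if_pos rfl]

lemma sol_m8 : sol m a b (m + 8) = b 1 := by
  unfold sol
  rw [if_neg (by omega), if_neg (by omega), if_neg (by omega), if_neg (by omega),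
    if_neg (by omega), if_neg (by omega), if_neg (by omega), if_neg (by omega), if_pos rfl]

lemma sol_m9 : sol m a b (m + 9) = (b 1) ^ 2 := by
  unfold sol
  rw [if_neg (by omega), if_neg (by omega), if_neg (by omega), if_neg (by omega),
    if_neg (by omega), if_neg (by omega), if_neg (by omega), if_neg (by omega),
    if_neg (by omega), if_pos rfl]

lemma sol_m10 : sol m a b (m + 10) = b 2 := by
  unfold sol
  rw [if_neg (by omega), if_neg (by omega), if_neg (by omega), if_neg (by omega),
    if_neg (by omega), if_neg (by omega), if_neg (by omega), if_neg (by omega),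
    if_neg (by omega), if_neg (by omega), if_pos rfl]

lemma sol_m11 : sol m a b (m + 11) = (b 2) ^ 2 := by
  unfold sol
  rw [if_neg (by omega), if_neg (by omega), if_neg (by omega), if_neg (by omega),
    if_neg (by omega), if_neg (by omega), if_neg (by omega), if_neg (by omega),
    if_neg (by omega), if_neg (by omega), if_neg (by omega), if_pos rfl]

lemma sol_m12 : sol m a b (m + 12) = (b 0) ^ 2 + (b 1) ^ 2 := by
  unfold sol
  rw [if_neg (by omega), if_neg (by omega), if_neg (by omega), if_neg (by omega),
    if_neg (by omega), if_neg (by omega), if_neg (by omega), if_neg (by omega),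
    if_neg (by omega), if_neg (by omega), if_neg (by omega), if_neg (by omega), if_pos rfl]

lemma sol_out {i : ℕ} (h : i = 0 ∨ m + 12 < i) : sol m a b i = 0 := by
  unfold sol
  rcases h with rfl | h
  · rw [if_pos rfl]
  · rw [if_neg (by omega), if_neg (by omega), if_neg (by omega), if_neg (by omega),
      if_neg (by omega), if_neg (by omega), if_neg (by omega), if_neg (by omega),
      if_neg (by omega), if_neg (by omega), if_neg (by omega), if_neg (by omega),
      if_neg (by omega)]

set_option maxHeartbeats 1600000 in
/-- The main set identity. -/
lemma TSet_eq (m : ℕ) :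
    TSet (m + 12) = insert (0 : ℕ → ℤ)
      ((fun p : ℤ × (Fin 3 → ℤ) => sol m p.1 p.2) ''
        {p : ℤ × (Fin 3 → ℤ) | p.1 ∈ Afin m ∧ ∑ i, (p.2 i) ^ 2 = p.1 ^ 2 ^ m}) := by
  ext x
  simp only [Set.mem_insert_iff, Set.mem_image, Set.mem_setOf_eq, Prod.exists]
  constructor
  · rintro ⟨hz, hsys⟩
    rw [TSys_arith] at hsys
    obtain ⟨h1, h2, h3, h4, h5, h6, h7, h8, h9, h10, h11⟩ := hsys
    -- the doubling chain
    have hch : ∀ i, 1 ≤ i → i ≤ m + 1 → x i = (x 1) ^ 2 ^ (i - 1) := by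
      intro i
      induction i with
      | zero => intro h; exact absurd h (by omega)
      | succ i ih =>
        intro _ hle
        by_cases hi : i = 0
        · subst hi; norm_num
        · have h1i : 1 ≤ i := by omega
          have hx : x i * x i = x (i + 1) := h1 i h1i (by omega)
          rw [← hx, ih h1i (by omega), ← pow_add]
          congr 1
          rw [show i + 1 - 1 = (i - 1) + 1 by omega, pow_succ]
          ring
    have hm1 : x (m + 1) = (x 1) ^ 2 ^ m := by
      have := hch (m + 1) (by omega) le_rfl
      rwa [Nat.add_sub_cancel] at this
    -- x (m+2) is idempotent
    have ht : x (m + 2) = 0 ∨ x (m + 2) = 1 := by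
      have h0 : x (m + 2) * (x (m + 2) - 1) = 0 := by linear_combination h2
      rcases mul_eq_zero.mp h0 with h | h
      · exact Or.inl h
      · exact Or.inr (by linarith)
    -- squares
    have e7 : (x (m + 6)) ^ 2 = x (m + 7) := by rw [sq]; exact h7
    have e8 : (x (m + 8)) ^ 2 = x (m + 9) := by rw [sq]; exact h8
    have e9 : (x (m + 10)) ^ 2 = x (m + 11) := by rw [sq]; exact h9
    rcases ht with ht | ht
    · -- zero solution
      left
      have hm3 : x (m + 3) = 0 := by rw [← h3, ht]; ring
      have hm5 : x (m + 5) = 0 := by rw [← h6, ht]; ring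
      have hm1' : x (m + 1) = 0 := by rw [← h5, hm5]; ring
      have hx1 : x 1 = 0 := by
        have := hm1' ▸ hm1
        exact pow_eq_zero_iff (by positivity) |>.mp this.symm
      have hm4 : x (m + 4) = 0 := by rw [← hx1, ← h4, hm3]; ring
      have hs : (x (m + 6)) ^ 2 + (x (m + 8)) ^ 2 + (x (m + 10)) ^ 2 = 0 := by
        rw [e7, e8, e9]; linarith [h10, h11, hm1']
      have z6 : x (m + 6) = 0 := by
        have : (x (m + 6)) ^ 2 = 0 := by
          linarith [sq_nonneg (x (m + 8)), sq_nonneg (x (m + 10)), sq_nonneg (x (m + 6))]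
        exact pow_eq_zero_iff two_ne_zero |>.mp this
      have z8 : x (m + 8) = 0 := by
        have : (x (m + 8)) ^ 2 = 0 := by
          linarith [sq_nonneg (x (m + 6)), sq_nonneg (x (m + 10)), sq_nonneg (x (m + 8))]
        exact pow_eq_zero_iff two_ne_zero |>.mp this
      have z10 : x (m + 10) = 0 := by
        have : (x (m + 10)) ^ 2 = 0 := by
          linarith [sq_nonneg (x (m + 6)), sq_nonneg (x (m + 8)), sq_nonneg (x (m + 10))]
        exact pow_eq_zero_iff two_ne_zero |>.mp this
      have z7 : x (m + 7) = 0 := by rw [← e7, z6]; ring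
      have z9 : x (m + 9) = 0 := by rw [← e8, z8]; ring
      have z11 : x (m + 11) = 0 := by rw [← e9, z10]; ring
      have z12 : x (m + 12) = 0 := by rw [← h10, z7, z9]; ring
      funext i
      show x i = 0
      have hcase : i = 0 ∨ (1 ≤ i ∧ i ≤ m + 1) ∨ i = m + 2 ∨ i = m + 3 ∨ i = m + 4 ∨
          i = m + 5 ∨ i = m + 6 ∨ i = m + 7 ∨ i = m + 8 ∨ i = m + 9 ∨ i = m + 10 ∨
          i = m + 11 ∨ i = m + 12 ∨ m + 12 < i := by omega
      rcases hcase with h | ⟨hi1, hi2⟩ | rfl | rfl | rfl | rfl | rfl | rfl | rfl | rfl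
        | rfl | rfl | rfl | h
      · exact hz i (Or.inl h)
      · rw [hch i hi1 hi2, hx1]
        exact zero_pow (by positivity)
      · exact ht
      · exact hm3
      · exact hm4
      · exact hm5
      · exact z6
      · exact z7
      · exact z8
      · exact z9
      · exact z10
      · exact z11
      · exact z12
      · exact hz i (Or.inr h)
    · -- nonzero solution
      right
      have hm3 : x (m + 3) = 2 := by rw [← h3, ht]; ring
      have hm4 : x (m + 4) = x 1 - 2 := by
        have := h4; rw [hm3] at this; linarith
      have h5' : (x 1 - 2) * x (m + 5) = (x 1) ^ 2 ^ m := by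
        rw [← hm4, ← hm1]; exact h5
      have hne : x 1 ≠ 2 := by
        intro h
        rw [h] at h5'
        norm_num at h5'
        exact pow_ne_zero _ (two_ne_zero) h5'.symm
      have h0 : x 1 - 2 ≠ 0 := sub_ne_zero.mpr hne
      have hdvd : (x 1 - 2) ∣ (x 1) ^ 2 ^ m := ⟨x (m + 5), h5'.symm⟩
      have hA : x 1 ∈ Afin m := mem_Afin_of_dvd hne hdvd
      have hc : x (m + 5) = (x 1) ^ 2 ^ m / (x 1 - 2) := by
        rw [← h5', Int.mul_ediv_cancel_left _ h0]
      refine ⟨x 1, ![x (m + 6), x (m + 8), x (m + 10)], ⟨hA, ?_⟩, ?_⟩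
      · rw [Fin.sum_univ_three]
        simp only [Matrix.cons_val_zero, Matrix.cons_val_one, Matrix.head_cons,
          Matrix.cons_val_two, Matrix.tail_cons]
        rw [e7, e8, e9]
        linarith [h10, h11, hm1]
      · funext i
        have hcase : i = 0 ∨ (1 ≤ i ∧ i ≤ m + 1) ∨ i = m + 2 ∨ i = m + 3 ∨ i = m + 4 ∨
            i = m + 5 ∨ i = m + 6 ∨ i = m + 7 ∨ i = m + 8 ∨ i = m + 9 ∨ i = m + 10 ∨
            i = m + 11 ∨ i = m + 12 ∨ m + 12 < i := by omega
        rcases hcase with h | ⟨hi1, hi2⟩ | rfl | rfl | rfl | rfl | rfl | rfl | rfl | rfl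
          | rfl | rfl | rfl | h
        · rw [sol_out (Or.inl h), hz i (Or.inl h)]
        · rw [sol_chain hi1 hi2, hch i hi1 hi2]
        · rw [sol_m2, ht]
        · rw [sol_m3, hm3]
        · rw [sol_m4, hm4]
        · rw [sol_m5, hc]
        · rw [sol_m6, Matrix.cons_val_zero]
        · rw [sol_m7, ← e7, Matrix.cons_val_zero]
        · rw [sol_m8, Matrix.cons_val_one, Matrix.cons_val_zero]
        · rw [sol_m9, ← e8, Matrix.cons_val_one, Matrix.cons_val_zero]
        · rw [sol_m10]; simp
        · rw [sol_m11, ← e9]; simp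
        · rw [sol_m12, ← h10, ← e7, ← e8, Matrix.cons_val_zero, Matrix.cons_val_one,
            Matrix.cons_val_zero]
        · rw [sol_out (Or.inr h), hz i (Or.inr h)]
  · rintro (rfl | ⟨a, b, ⟨hA, hsum⟩, rfl⟩)
    · -- the zero function is a solution
      refine ⟨fun i _ => rfl, ?_⟩
      rw [TSys_arith]
      refine ⟨fun i _ _ => ?_, ?_, ?_, ?_, ?_, ?_, ?_, ?_, ?_, ?_, ?_⟩ <;> simp
    · -- each `sol` is a solution
      refine ⟨fun i hi => sol_out hi, ?_⟩
      rw [TSys_arith]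
      refine ⟨?_, ?_, ?_, ?_, ?_, ?_, ?_, ?_, ?_, ?_, ?_⟩
      · intro i hi1 hi2
        rw [sol_chain hi1 (by omega), sol_chain (by omega) (by omega), ← pow_add]
        congr 1
        rw [show i + 1 - 1 = (i - 1) + 1 by omega, pow_succ]
        ring
      · rw [sol_m2]; ring
      · rw [sol_m2, sol_m3]; norm_num
      · rw [sol_m4, sol_m3, sol_one]; ring
      · rw [sol_m4, sol_m5, sol_top]
        exact Int.mul_ediv_cancel' (dvd_of_mem_Afin hA)
      · rw [sol_m2]; ring
      · rw [sol_m6, sol_m7]; ring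
      · rw [sol_m8, sol_m9]; ring
      · rw [sol_m10, sol_m11]; ring
      · rw [sol_m7, sol_m9, sol_m12]
      · rw [sol_m11, sol_m12, sol_top]
        rw [Fin.sum_univ_three] at hsum
        linarith

end Aux

theorem stmt3 (n : ℕ) (hn : 12 ≤ n) :
    (TSet n).ncard =
      1 + ∑ a ∈ ((Finset.range (2 ^ (n - 12) + 1)).image fun k => (2 + 2 ^ k : ℤ)) ∪
            ((Finset.range (2 ^ (n - 12) + 1)).image fun k => (2 - 2 ^ k : ℤ)),
          r3 (a ^ 2 ^ (n - 12)) := by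
  obtain ⟨m, rfl⟩ : ∃ m, n = m + 12 := ⟨n - 12, by omega⟩
  show (TSet (m + 12)).ncard = 1 + ∑ a ∈ Afin m, r3 (a ^ 2 ^ m)
  rw [TSet_eq m]
  have hBfin : {p : ℤ × (Fin 3 → ℤ) | p.1 ∈ Afin m ∧ ∑ i, (p.2 i) ^ 2 = p.1 ^ 2 ^ m}.Finite :=
    sig_finite (Afin m) (fun a => a ^ 2 ^ m)
  have hnot : (0 : ℕ → ℤ) ∉ (fun p : ℤ × (Fin 3 → ℤ) => sol m p.1 p.2) ''
      {p : ℤ × (Fin 3 → ℤ) | p.1 ∈ Afin m ∧ ∑ i, (p.2 i) ^ 2 = p.1 ^ 2 ^ m} := by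
    rintro ⟨⟨a, b⟩, -, heq⟩
    have h2 : sol m a b (m + 2) = 0 := congrFun heq (m + 2)
    rw [sol_m2] at h2
    exact one_ne_zero h2
  have hinj : Set.InjOn (fun p : ℤ × (Fin 3 → ℤ) => sol m p.1 p.2)
      {p : ℤ × (Fin 3 → ℤ) | p.1 ∈ Afin m ∧ ∑ i, (p.2 i) ^ 2 = p.1 ^ 2 ^ m} := by
    rintro ⟨a, b⟩ - ⟨a', b'⟩ - heq
    have key : ∀ j, sol m a b j = sol m a' b' j := fun j => congrFun heq j
    have ha : a = a' := by
      have h := key 1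
      rwa [sol_one, sol_one] at h
    have hb : b = b' := by
      funext i
      fin_cases i
      · show b 0 = b' 0
        have h := key (m + 6); rwa [sol_m6, sol_m6] at h
      · show b 1 = b' 1
        have h := key (m + 8); rwa [sol_m8, sol_m8] at h
      · show b 2 = b' 2
        have h := key (m + 10); rwa [sol_m10, sol_m10] at h
    rw [Prod.mk.injEq]; exact ⟨ha, hb⟩
  rw [Set.ncard_insert_of_notMem hnot (hBfin.image _), Set.ncard_image_of_injOn hinj,
    add_comm]
  congr 1
  exact sig_card (Afin m) (fun a => a ^ 2 ^ m)
end

section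
/- Let n ≥ 12 be an integer. A tuple (x_1, …, x_n) ∈ ℤ^n is a solution of the system T_n if and only if either x_1 = x_2 = … = x_n = 0, or the following hold: x_{n−10} = 1, x_{n−9} = 2, x_{n−8} = x_1 − 2, x_{i+1} = x_i² for all i ∈ {1, …, n−12}, (x_1 − 2) · x_{n−7} = x_{n−11} = x_1^(2^(n-12)), x_{n−5} = x_{n−6}², x_{n−3} = x_{n−4}², x_{n−1} = x_{n−2}², x_n = x_{n−5} + x_{n−3}, and x_{n−6}² + x_{n−4}² + x_{n−2}² = x_1^(2^(n-12)). -/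
lemma chain_pow (m : ℕ) (x : ℕ → ℤ) (h : ∀ i, 1 ≤ i → i ≤ m → x i * x i = x (i + 1)) :
    ∀ k, k ≤ m → x (1 + k) = x 1 ^ 2 ^ k := by
  intro k
  induction k with
  | zero => intro _; simp
  | succ k ih =>
    intro hk
    have h1 := h (1 + k) (by omega) (by omega)
    have h2 := ih (by omega)
    have : x (1 + (k + 1)) = x (1 + k) * x (1 + k) := by
      rw [show 1 + (k + 1) = (1 + k) + 1 by omega, h1]
    rw [this, h2, ← pow_add]
    congr 1
    rw [pow_succ]; ring

set_option maxHeartbeats 1000000 in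
theorem stmt4 (n : ℕ) (hn : 12 ≤ n) (x : ℕ → ℤ) :
    TSys n x ↔
      (∀ i, 1 ≤ i → i ≤ n → x i = 0) ∨
      (x (n - 10) = 1 ∧
       x (n - 9) = 2 ∧
       x (n - 8) = x 1 - 2 ∧
       (∀ i, 1 ≤ i → i ≤ n - 12 → x (i + 1) = (x i) ^ 2) ∧
       (x 1 - 2) * x (n - 7) = x (n - 11) ∧
       x (n - 11) = (x 1) ^ 2 ^ (n - 12) ∧
       x (n - 5) = (x (n - 6)) ^ 2 ∧
       x (n - 3) = (x (n - 4)) ^ 2 ∧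
       x (n - 1) = (x (n - 2)) ^ 2 ∧
       x n = x (n - 5) + x (n - 3) ∧
       (x (n - 6)) ^ 2 + (x (n - 4)) ^ 2 + (x (n - 2)) ^ 2 = (x 1) ^ 2 ^ (n - 12)) := by
  constructor
  · rintro ⟨e1, e2, e3, e4, e5, e6, e7, e8, e9, e10, e11⟩
    have hch := chain_pow (n - 12) x e1
    have hidx : 1 + (n - 12) = n - 11 := by omega
    have hn11 : x (n - 11) = x 1 ^ 2 ^ (n - 12) := by
      rw [← hidx]; exact hch (n - 12) le_rfl
    have h01 : x (n - 10) = 0 ∨ x (n - 10) = 1 := by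
      rcases mul_eq_zero.mp (show x (n - 10) * (x (n - 10) - 1) = 0 by linear_combination e2) with h | h
      · exact Or.inl h
      · exact Or.inr (by linarith)
    rcases h01 with h0 | h1
    · -- zero case
      left
      have hn9 : x (n - 9) = 0 := by linarith [e3]
      have hn7 : x (n - 7) = 0 := by
        have := e6; rw [h0] at this; linarith
      have hn11z : x (n - 11) = 0 := by rw [← e5, hn7]; ring
      have hx1 : x 1 = 0 := by
        have : x 1 ^ 2 ^ (n - 12) = 0 := by rw [← hn11, hn11z]
        exact pow_eq_zero_iff (by positivity) |>.mp this
      -- sums of squares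
      have hsum : x (n - 2) ^ 2 + x (n - 6) ^ 2 + x (n - 4) ^ 2 = 0 := by
        linear_combination e9 + e7 + e8 + e10 + e11 + hn11z
      have s2 := sq_nonneg (x (n - 2))
      have s4 := sq_nonneg (x (n - 4))
      have s6 := sq_nonneg (x (n - 6))
      have h2 : x (n - 2) = 0 :=
        pow_eq_zero_iff two_ne_zero |>.mp (by linarith : x (n - 2) ^ 2 = 0)
      have h4 : x (n - 4) = 0 :=
        pow_eq_zero_iff two_ne_zero |>.mp (by linarith : x (n - 4) ^ 2 = 0)
      have h6 : x (n - 6) = 0 :=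
        pow_eq_zero_iff two_ne_zero |>.mp (by linarith : x (n - 6) ^ 2 = 0)
      have h5 : x (n - 5) = 0 := by linear_combination -e7 + h6 * x (n - 6)
      have h3 : x (n - 3) = 0 := by linear_combination -e8 + h4 * x (n - 4)
      have hn1 : x (n - 1) = 0 := by linear_combination -e9 + h2 * x (n - 2)
      have hnn : x n = 0 := by linear_combination -e10 + h5 + h3
      have hn8 : x (n - 8) = 0 := by linarith [e4]
      intro i hi1 hi2
      rcases (show i ≤ n - 11 ∨ i = n - 10 ∨ i = n - 9 ∨ i = n - 8 ∨ i = n - 7 ∨ i = n - 6 ∨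
          i = n - 5 ∨ i = n - 4 ∨ i = n - 3 ∨ i = n - 2 ∨ i = n - 1 ∨ i = n by omega) with
        h | h | h | h | h | h | h | h | h | h | h | h
      · have : x (1 + (i - 1)) = x 1 ^ 2 ^ (i - 1) := hch (i - 1) (by omega)
        rw [show 1 + (i - 1) = i by omega, hx1] at this
        rw [this]; simp
      all_goals subst h
      exacts [h0, hn9, hn8, hn7, h6, h5, h4, h3, h2, hn1, hnn]
    · -- nonzero case
      right
      have hn9 : x (n - 9) = 2 := by rw [← e3, h1]; norm_num
      have hn8 : x (n - 8) = x 1 - 2 := by linarith [e4]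
      refine ⟨h1, hn9, hn8, fun i a b => by linear_combination - e1 i a b,
        by linear_combination e5 - hn8 * x (n - 7), hn11,
        by linear_combination -e7, by linear_combination -e8, by linear_combination -e9,
        e10.symm, by linear_combination e7 + e8 + e9 + e10 + e11 + hn11⟩
  · rintro (hz | ⟨h1, h2, h3, h4, h5, h6, h7, h8, h9, h10, h11⟩)
    · have z : ∀ k, 1 ≤ k → k ≤ n → x k = 0 := hz
      have z1 := z 1 (by omega) (by omega)
      have z11 := z (n - 11) (by omega) (by omega)
      have z10 := z (n - 10) (by omega) (by omega)
      have z9 := z (n - 9) (by omega) (by omega)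
      have z8 := z (n - 8) (by omega) (by omega)
      have z7 := z (n - 7) (by omega) (by omega)
      have z6 := z (n - 6) (by omega) (by omega)
      have z5 := z (n - 5) (by omega) (by omega)
      have z4 := z (n - 4) (by omega) (by omega)
      have z3 := z (n - 3) (by omega) (by omega)
      have z2 := z (n - 2) (by omega) (by omega)
      have zn := z n (by omega) (by omega)
      have znn := z (n - 1) (by omega) (by omega)
      refine ⟨fun i a b => by
          rw [z i (by omega) (by omega), z (i + 1) (by omega) (by omega)]; ring,
        by rw [z10]; ring, by rw [z10, z9]; ring, by rw [z8, z9, z1]; ring,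
        by rw [z8, z7, z11]; ring, by rw [z10, z7]; ring, by rw [z6, z5]; ring,
        by rw [z4, z3]; ring, by rw [z2, znn]; ring, by rw [z5, z3, zn]; ring,
        by rw [znn, zn, z11]; ring⟩
    · refine ⟨fun i a b => by rw [h4 i a b]; ring, by rw [h1]; ring, by rw [h1, h2]; norm_num,
        by rw [h2, h3]; ring, by rw [h3]; exact h5, by rw [h1]; ring,
        by rw [h7]; ring, by rw [h8]; ring, by rw [h9]; ring, h10.symm, ?_⟩
      rw [h10, h9, h7, h8, h6]; linarith [h11]
end

section
/- For every integer n ≥ 4, the system S_n has a solution in positive integers and has only finitely many solutions in integers; moreover every integer solution (x_1, …, x_n) of S_n satisfies |x_i| ≤ (2 + 2^(2^(n-4)))^(2^(n-4)) for all i ∈ {1, …, n}. -/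
/-- The system `S_n`, in the unknowns `x 1, …, x n`. -/
def SSys (n : ℕ) (x : ℕ → ℤ) : Prop :=
  (∀ i, 1 ≤ i → i ≤ n - 4 → x i * x i = x (i + 1)) ∧
  x (n - 2) + 1 = x 1 ∧
  x (n - 1) + 1 = x (n - 2) ∧
  x (n - 1) * x n = x (n - 3)

/-- The witness function: a positive solution of `S_n` with `x 1 = 3`. -/
def wfun (n : ℕ) : ℕ → ℤ := fun i =>
  if i = 0 then 0
  else if i ≤ n - 3 then 3 ^ 2 ^ (i - 1)
  else if i = n - 2 then 2
  else if i = n - 1 then 1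
  else 3 ^ 2 ^ (n - 4)

lemma wfun_low (n : ℕ) (j : ℕ) (h1 : 1 ≤ j) (h2 : j ≤ n - 3) :
    wfun n j = 3 ^ 2 ^ (j - 1) := by
  simp only [wfun]
  rw [if_neg (by omega), if_pos h2]

lemma wfun_n2 (n : ℕ) (hn : 4 ≤ n) : wfun n (n - 2) = 2 := by
  simp only [wfun]
  rw [if_neg (by omega), if_neg (by omega)]
  simp

lemma wfun_n1 (n : ℕ) (hn : 4 ≤ n) : wfun n (n - 1) = 1 := by
  simp only [wfun]
  rw [if_neg (by omega), if_neg (by omega), if_neg (by omega)]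
  simp

lemma wfun_n (n : ℕ) (hn : 4 ≤ n) : wfun n n = 3 ^ 2 ^ (n - 4) := by
  simp only [wfun]
  rw [if_neg (by omega), if_neg (by omega), if_neg (by omega), if_neg (by omega)]

lemma two_pow_split (i : ℕ) (h : 1 ≤ i) : (2:ℕ) ^ (i - 1) + 2 ^ (i - 1) = 2 ^ i := by
  calc (2:ℕ) ^ (i-1) + 2 ^ (i-1) = 2 ^ (i-1) * 2 := (mul_two _).symm
    _ = 2 ^ (i-1+1) := (pow_succ _ _).symm
    _ = 2 ^ i := by rw [Nat.sub_add_cancel h]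

theorem stmt13 (n : ℕ) (hn : 4 ≤ n) :
    (∃ x : ℕ → ℤ, SSys n x ∧ ∀ i, 1 ≤ i → i ≤ n → 0 < x i) ∧
    {x : ℕ → ℤ | (∀ i, i = 0 ∨ n < i → x i = 0) ∧ SSys n x}.Finite ∧
    ∀ x : ℕ → ℤ, SSys n x → ∀ i, 1 ≤ i → i ≤ n →
      |x i| ≤ (2 + 2 ^ 2 ^ (n - 4) : ℤ) ^ 2 ^ (n - 4) := by
  set k : ℕ := 2 ^ (n - 4) with hk
  have hk1 : 1 ≤ k := Nat.one_le_two_pow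
  set B : ℤ := (2 + 2 ^ k) ^ k with hBdef
  have hbase : (1:ℤ) ≤ 2 + 2 ^ k := by
    have := pow_pos (show (0:ℤ) < 2 by norm_num) k
    linarith
  have hbase2 : (2:ℤ) + 2 ^ k ≤ B := le_self_pow₀ hbase (by omega)
  have hB0 : (0:ℤ) ≤ B := by positivity
  -- The bound part
  have bound : ∀ x : ℕ → ℤ, SSys n x → ∀ i, 1 ≤ i → i ≤ n → |x i| ≤ B := by
    rintro x ⟨h1, h2, h3, h4⟩ i hi1 hi2
    set a : ℤ := x 1 with ha
    have chain : ∀ m, m ≤ n - 4 → x (m + 1) = a ^ 2 ^ m := by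
      intro m
      induction m with
      | zero => intro _; simp [ha]
      | succ m ih =>
        intro hm
        have e := h1 (m + 1) (by omega) (by omega)
        rw [ih (by omega)] at e
        rw [show m + 1 + 1 = m + 2 from rfl] at e
        rw [show m + 2 = (m + 1) + 1 from rfl, ← e, ← pow_add]
        congr 1
        exact two_pow_split (m + 1) (by omega)
    have hn3 : x (n - 3) = a ^ k := by
      have := chain (n - 4) le_rfl
      rwa [show n - 4 + 1 = n - 3 by omega] at this
    have hxn2 : x (n - 2) = a - 1 := by linarith
    have hxn1 : x (n - 1) = a - 2 := by linarith
    have h4' : (a - 2) * x n = a ^ k := by rw [← hxn1, h4, hn3]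
    have hne : a ≠ 2 := by
      intro h
      rw [h] at h4'
      simp at h4'
      have : (0:ℤ) < 2 ^ k := by positivity
      omega
    have hdvd : (a - 2) ∣ (2:ℤ) ^ k := by
      have d1 : (a - 2) ∣ a ^ k := ⟨x n, h4'.symm⟩
      have d2 : (a - 2) ∣ a ^ k - 2 ^ k := sub_dvd_pow_sub_pow a 2 k
      have := dvd_sub d1 d2
      rwa [sub_sub_cancel] at this
    have habs : |a - 2| ≤ 2 ^ k := by
      refine Int.le_of_dvd (by positivity) ((abs_dvd _ _).mpr hdvd)
    have haabs : |a| ≤ 2 + 2 ^ k := by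
      have : |a| = |(a - 2) + 2| := by ring_nf
      rw [this]
      calc |(a - 2) + 2| ≤ |a - 2| + |(2:ℤ)| := abs_add_le _ _
        _ ≤ 2 ^ k + 2 := by rw [abs_two]; linarith
        _ = 2 + 2 ^ k := by ring
    rcases (show i ≤ n - 3 ∨ i = n - 2 ∨ i = n - 1 ∨ i = n by omega) with hc | hc | hc | hc
    · have hxi : x i = a ^ 2 ^ (i - 1) := by
        have := chain (i - 1) (by omega)
        rwa [show i - 1 + 1 = i by omega] at this
      rw [hxi, abs_pow]
      calc |a| ^ 2 ^ (i - 1) ≤ (2 + 2 ^ k) ^ 2 ^ (i - 1) :=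
            pow_le_pow_left₀ (abs_nonneg _) haabs _
        _ ≤ (2 + 2 ^ k) ^ k :=
            pow_le_pow_right₀ hbase (Nat.pow_le_pow_right (by norm_num) (by omega))
    · rw [hc, hxn2]
      have : |a - 1| = |(a - 2) + 1| := by ring_nf
      rw [this]
      calc |(a - 2) + 1| ≤ |a - 2| + |(1:ℤ)| := abs_add_le _ _
        _ ≤ 2 ^ k + 1 := by rw [abs_one]; linarith
        _ ≤ B := by linarith
    · rw [hc, hxn1]
      linarith
    · rw [hc]
      have h1a : (1:ℤ) ≤ |a - 2| := Int.one_le_abs (by omega)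
      calc |x n| ≤ |a - 2| * |x n| := le_mul_of_one_le_left (abs_nonneg _) h1a
        _ = |a| ^ k := by rw [← abs_mul, h4', abs_pow]
        _ ≤ B := pow_le_pow_left₀ (abs_nonneg _) haabs _
  refine ⟨?_, ?_, bound⟩
  · -- existence of a positive solution
    refine ⟨wfun n, ⟨?_, ?_, ?_, ?_⟩, ?_⟩
    · intro i hi1 hi2
      rw [wfun_low n i hi1 (by omega), wfun_low n (i + 1) (by omega) (by omega),
        ← pow_add, two_pow_split i hi1, Nat.add_sub_cancel]
    · rw [wfun_n2 n hn, wfun_low n 1 le_rfl (by omega)]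
      norm_num
    · rw [wfun_n1 n hn, wfun_n2 n hn]; norm_num
    · rw [wfun_n1 n hn, wfun_n n hn, wfun_low n (n - 3) (by omega) le_rfl,
        show n - 3 - 1 = n - 4 by omega, one_mul]
    · intro i hi1 hi2
      rcases (show i ≤ n - 3 ∨ i = n - 2 ∨ i = n - 1 ∨ i = n by omega) with hc | hc | hc | hc
      · rw [wfun_low n i hi1 hc]; positivity
      · rw [hc, wfun_n2 n hn]; norm_num
      · rw [hc, wfun_n1 n hn]; norm_num
      · rw [hc, wfun_n n hn]; positivity
  · -- finiteness
    apply Set.Finite.of_finite_image (f := fun x (j : Fin (n + 1)) => x j)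
    · apply Set.Finite.subset (Set.Finite.pi (fun _ : Fin (n + 1) => Set.finite_Icc (-B) B))
      rintro y ⟨x, ⟨hz, hsys⟩, rfl⟩
      intro j _
      simp only [Set.mem_Icc]
      by_cases hj : (j : ℕ) = 0
      · rw [hz j (Or.inl hj)]
        constructor <;> linarith
      · have hb := bound x hsys j (by omega) (by have := j.isLt; omega)
        exact abs_le.mp hb
    · intro x hx y hy hxy
      funext i
      by_cases hi : i ≤ n
      · exact congrFun hxy ⟨i, by omega⟩
      · rw [hx.1 i (Or.inr (by omega)), hy.1 i (Or.inr (by omega))]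
end

section
/- Let D(x_1, …, x_n) be a polynomial with integer coefficients in n variables such that the set of tuples (x_1, …, x_n) ∈ ℤ^n with D(x_1, …, x_n) = 0 is non-empty and finite, and let d be the maximal height of an integer solution of D(x_1, …, x_n) = 0. Then the set of integer solutions (x_1, …, x_n, u_1, u_2, u_3, u_4, v_1, v_2, v_3, v_4) ∈ ℤ^(n+8) of the equation D²(x_1, …, x_n) + (n² + x_1² + … + x_n² − u_1² − u_2² − u_3² − u_4² − v_1² − v_2² − v_3² − v_4²)² = 0 is finite and its cardinality is strictly greater than d. -/
/-- The height of an integer tuple `(x 1, …, x n)`: the maximum of `n` and the absolute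
values of the coordinates. -/
def height (n : ℕ) (x : Fin n → ℤ) : ℕ :=
  max n (Finset.univ.sup fun i => (x i).natAbs)

/-- The set of integer solutions `(x, u, v) ∈ ℤ^n × ℤ^4 × ℤ^4` of the equation
`D(x)² + (n² + x₁² + ⋯ + xₙ² − u₁² − ⋯ − u₄² − v₁² − ⋯ − v₄²)² = 0`. -/
def augSols (n : ℕ) (D : MvPolynomial (Fin n) ℤ) :
    Set ((Fin n → ℤ) × (Fin 4 → ℤ) × (Fin 4 → ℤ)) :=
  {p | (MvPolynomial.eval p.1 D) ^ 2 +
        ((n : ℤ) ^ 2 + ∑ i, (p.1 i) ^ 2 - ∑ j, (p.2.1 j) ^ 2 - ∑ j, (p.2.2 j) ^ 2) ^ 2 = 0}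

lemma exists_rep (m : ℕ) : ∃ u : Fin 4 → ℤ, ∑ j, (u j)^2 = m := by
  obtain ⟨a,b,c,d,h⟩ := Nat.sum_four_squares m
  refine ⟨![a,b,c,d], ?_⟩
  simp [Fin.sum_univ_four]
  push_cast [← h]
  ring

noncomputable def rep (m : ℕ) : Fin 4 → ℤ := (exists_rep m).choose

lemma rep_spec (m : ℕ) : ∑ j, (rep m j)^2 = m := (exists_rep m).choose_spec

lemma mem_augSols_iff (n : ℕ) (D : MvPolynomial (Fin n) ℤ)
    (p : (Fin n → ℤ) × (Fin 4 → ℤ) × (Fin 4 → ℤ)) :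
    p ∈ augSols n D ↔ MvPolynomial.eval p.1 D = 0 ∧
      ∑ j, (p.2.1 j) ^ 2 + ∑ j, (p.2.2 j) ^ 2 = (n : ℤ) ^ 2 + ∑ i, (p.1 i) ^ 2 := by
  unfold augSols
  simp only [Set.mem_setOf_eq]
  constructor
  · intro h
    have h1 : MvPolynomial.eval p.1 D = 0 := by nlinarith [sq_nonneg (MvPolynomial.eval p.1 D), sq_nonneg ((n : ℤ) ^ 2 + ∑ i, (p.1 i) ^ 2 - ∑ j, (p.2.1 j) ^ 2 - ∑ j, (p.2.2 j) ^ 2)]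
    have h2 : (n : ℤ) ^ 2 + ∑ i, (p.1 i) ^ 2 - ∑ j, (p.2.1 j) ^ 2 - ∑ j, (p.2.2 j) ^ 2 = 0 := by nlinarith [sq_nonneg (MvPolynomial.eval p.1 D), sq_nonneg ((n : ℤ) ^ 2 + ∑ i, (p.1 i) ^ 2 - ∑ j, (p.2.1 j) ^ 2 - ∑ j, (p.2.2 j) ^ 2)]
    exact ⟨h1, by linarith⟩
  · rintro ⟨h1, h2⟩
    rw [h1]
    have : (n : ℤ) ^ 2 + ∑ i, (p.1 i) ^ 2 - ∑ j, (p.2.1 j) ^ 2 - ∑ j, (p.2.2 j) ^ 2 = 0 := by linarith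
    rw [this]; ring

theorem stmt15 (n : ℕ) (D : MvPolynomial (Fin n) ℤ) (d : ℕ)
    (hne : {x : Fin n → ℤ | MvPolynomial.eval x D = 0}.Nonempty)
    (hfin : {x : Fin n → ℤ | MvPolynomial.eval x D = 0}.Finite)
    (hd : IsGreatest (height n '' {x : Fin n → ℤ | MvPolynomial.eval x D = 0}) d) :
    (augSols n D).Finite ∧ d < (augSols n D).ncard := by
  set S := {x : Fin n → ℤ | MvPolynomial.eval x D = 0} with hS
  -- Finiteness
  have hAfin : (augSols n D).Finite := by
    set Nx : (Fin n → ℤ) → ℤ := fun x => (n : ℤ) ^ 2 + ∑ i, (x i) ^ 2 with hNx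
    have hTfin : ∀ x : Fin n → ℤ,
        ({q : (Fin 4 → ℤ) × (Fin 4 → ℤ) | ∑ j, (q.1 j) ^ 2 + ∑ j, (q.2 j) ^ 2 = Nx x}).Finite := by
      intro x
      have hsub : {q : (Fin 4 → ℤ) × (Fin 4 → ℤ) | ∑ j, (q.1 j) ^ 2 + ∑ j, (q.2 j) ^ 2 = Nx x} ⊆
          (Set.pi Set.univ fun _ : Fin 4 => Set.Icc (-(Nx x)) (Nx x)) ×ˢ
          (Set.pi Set.univ fun _ : Fin 4 => Set.Icc (-(Nx x)) (Nx x)) := by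
        rintro ⟨u, v⟩ hq
        simp only [Set.mem_setOf_eq] at hq
        have hub : ∀ j, (u j) ^ 2 ≤ Nx x ∧ (v j) ^ 2 ≤ Nx x := by
          intro j
          have h1 : (u j) ^ 2 ≤ ∑ j, (u j) ^ 2 :=
            Finset.single_le_sum (fun i _ => sq_nonneg (u i)) (Finset.mem_univ j)
          have h2 : (v j) ^ 2 ≤ ∑ j, (v j) ^ 2 :=
            Finset.single_le_sum (fun i _ => sq_nonneg (v i)) (Finset.mem_univ j)
          have h3 : (0:ℤ) ≤ ∑ j, (u j) ^ 2 := Finset.sum_nonneg fun i _ => sq_nonneg _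
          have h4 : (0:ℤ) ≤ ∑ j, (v j) ^ 2 := Finset.sum_nonneg fun i _ => sq_nonneg _
          constructor <;> linarith
        constructor <;>
        · intro j _
          simp only [Set.mem_Icc]
          have := hub j
          constructor <;> nlinarith [this.1, this.2]
      exact Set.Finite.subset
        (Set.Finite.prod (Set.Finite.pi fun _ => Set.finite_Icc _ _)
          (Set.Finite.pi fun _ => Set.finite_Icc _ _)) hsub
    have hsub : augSols n D ⊆ ⋃ x ∈ S,
        ({x} ×ˢ {q : (Fin 4 → ℤ) × (Fin 4 → ℤ) | ∑ j, (q.1 j) ^ 2 + ∑ j, (q.2 j) ^ 2 = Nx x}) := by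
      rintro ⟨x, q⟩ hp
      rw [mem_augSols_iff] at hp
      refine Set.mem_biUnion hp.1 ?_
      exact Set.mem_prod.mpr ⟨rfl, hp.2⟩
    exact Set.Finite.subset (Set.Finite.biUnion hfin
      (fun x _ => (Set.finite_singleton x).prod (hTfin x))) hsub
  refine ⟨hAfin, ?_⟩
  -- lower bound on cardinality
  obtain ⟨x₀, hx₀S, hx₀h⟩ := hd.1
  have hNnn : (0:ℤ) ≤ ∑ i, (x₀ i) ^ 2 := Finset.sum_nonneg fun i _ => sq_nonneg _
  set N : ℤ := (n : ℤ) ^ 2 + ∑ i, (x₀ i) ^ 2 with hN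
  have hN0 : (0:ℤ) ≤ N := by positivity
  -- d² ≤ N
  have hd2N : (d:ℤ)^2 ≤ N := by
    rcases Nat.eq_zero_or_pos n with hn0 | hn0
    · subst hn0
      have : d = 0 := by
        rw [← hx₀h]; unfold height; simp
      rw [this]; simpa using hN0
    · haveI : Nonempty (Fin n) := Fin.pos_iff_nonempty.mp hn0
      have hne' : (Finset.univ : Finset (Fin n)).Nonempty := Finset.univ_nonempty
      obtain ⟨i, _, hi⟩ := Finset.exists_mem_eq_sup Finset.univ hne' (fun i => (x₀ i).natAbs)
      have hdmax : d = max n (x₀ i).natAbs := by rw [← hx₀h]; unfold height; rw [hi]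
      have hsq : ((x₀ i).natAbs : ℤ)^2 ≤ ∑ j, (x₀ j) ^ 2 := by
        have h1 : ((x₀ i).natAbs : ℤ)^2 = (x₀ i)^2 := by
          rw [Int.natCast_natAbs]; exact sq_abs _
        rw [h1]
        exact Finset.single_le_sum (fun j _ => sq_nonneg (x₀ j)) (Finset.mem_univ i)
      rcases le_total n ((x₀ i).natAbs) with hle | hle
      · have : d = (x₀ i).natAbs := by omega
        rw [this]; calc ((x₀ i).natAbs:ℤ)^2 ≤ ∑ j, (x₀ j) ^ 2 := hsq
          _ ≤ N := by rw [hN]; linarith [sq_nonneg ((n:ℤ))]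
      · have : d = n := by omega
        rw [this]; rw [hN]; nlinarith
  have hdN : (d:ℤ) ≤ N := by nlinarith [Int.natCast_nonneg d]
  have hdNnat : d ≤ N.toNat := by omega
  -- the injection
  set g : ℕ → (Fin n → ℤ) × (Fin 4 → ℤ) × (Fin 4 → ℤ) :=
    fun m => (x₀, rep m, rep (N.toNat - m)) with hg
  have hgmem : ∀ m ≤ d, g m ∈ augSols n D := by
    intro m hm
    rw [mem_augSols_iff]
    refine ⟨hx₀S, ?_⟩
    simp only [hg]
    rw [rep_spec, rep_spec]
    have hmN : m ≤ N.toNat := le_trans hm hdNnat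
    have : ((N.toNat - m : ℕ) : ℤ) = N - m := by omega
    rw [this, hN]; ring
  have hginj : ∀ m ≤ d, ∀ m' ≤ d, g m = g m' → m = m' := by
    intro m _ m' _ he
    have : rep m = rep m' := by
      have := congrArg (fun p => p.2.1) he
      simpa [hg] using this
    have h2 : (m : ℤ) = m' := by
      rw [← rep_spec m, ← rep_spec m', this]
    exact_mod_cast h2
  -- conclude
  have hsub : g '' (Set.Icc 0 d) ⊆ augSols n D := by
    rintro _ ⟨m, hm, rfl⟩
    exact hgmem m (by simpa using hm.2)
  have hcard : (g '' (Set.Icc 0 d)).ncard = d + 1 := by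
    rw [Set.ncard_image_of_injOn]
    · have : (Set.Icc 0 d) = ↑(Finset.Icc 0 d) := by simp
      rw [this, Set.ncard_coe_finset]; simp
    · intro a ha b hb hab
      exact hginj a (by simpa using ha.2) b (by simpa using hb.2) hab
  have := Set.ncard_le_ncard hsub hAfin
  omega
end
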